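/- arXiv:2509.04251 — 3 statements merged into one kernel-verified Lean document; each statement's English description precedes it below -/
import Mathlib

section
/- Energy preservation of the SSAV iteration (Theorem 3.1): if (v△, u△, ρ△) ∈ E × E × ℝ satisfies the one-step SSAV deterministic system v△ = v − α h (u + u△) − h (ρ△ + ρ) Q(u), u△ = u + (h/2)(v△ + v), ρ△ = ρ + (h/2) ⟨Q(u), v△ + v⟩, then (1/2)‖v△‖² + α‖u△‖² + (ρ△)² = (1/2)‖v‖² + α‖u‖² + ρ². -/
open RealInnerProductSpace

/-- The scalar auxiliary function `S(u) = √(κ Φ(u) + C_H − α ‖u‖²)`. -/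
noncomputable def ssavS {m : ℕ} (α κ C_H : ℝ) (Φ : EuclideanSpace ℝ (Fin m) → ℝ)
    (x : EuclideanSpace ℝ (Fin m)) : ℝ :=
  Real.sqrt (κ * Φ x + C_H - α * ‖x‖ ^ 2)

/-- The auxiliary vector `Q(u) = (κ ∇Φ(u) − 2α u) / (2 S(u))`. -/
noncomputable def ssavQ {m : ℕ} (α κ C_H : ℝ) (Φ : EuclideanSpace ℝ (Fin m) → ℝ)
    (gradΦ : EuclideanSpace ℝ (Fin m) → EuclideanSpace ℝ (Fin m))
    (x : EuclideanSpace ℝ (Fin m)) : EuclideanSpace ℝ (Fin m) :=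
  (2 * ssavS α κ C_H Φ x)⁻¹ • (κ • gradΦ x - (2 * α) • x)

/-!
Pair each update with the midpoint of its own variable: `vd - v` with `(vd + v) / 2`,
`ud - u` with `α (ud + u)` and `ρd - ρ` with `ρd + ρ`. Each pairing turns a difference of squares
into an energy increment, and since the scheme is a midpoint discretisation of a skew system the
increments cancel: `α h ⟪u + ud, vd + v⟫` is shared by the kinetic and potential parts, and
`h (ρd + ρ) ⟪q, vd + v⟫` by the kinetic and auxiliary parts.
-/

section SSAVStep

variable {E : Type*} [NormedAddCommGroup E] [InnerProductSpace ℝ E]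

theorem real_inner_sub_add_eq_norm_sq_sub_norm_sq (x y : E) :
    ⟪x - y, x + y⟫ = ‖x‖ ^ 2 - ‖y‖ ^ 2 := by
  rw [inner_sub_left, inner_add_right, inner_add_right, real_inner_self_eq_norm_sq,
    real_inner_self_eq_norm_sq, real_inner_comm x y]
  ring

theorem ssav_step_energy_eq (α h ρ ρd : ℝ) (q v u vd ud : E)
    (hv : vd = v - (α * h) • (u + ud) - (h * (ρd + ρ)) • q)
    (hu : ud = u + (h / 2) • (vd + v))
    (hρ : ρd = ρ + (h / 2) * ⟪q, vd + v⟫) :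
    (1 / 2) * ‖vd‖ ^ 2 + α * ‖ud‖ ^ 2 + ρd ^ 2
      = (1 / 2) * ‖v‖ ^ 2 + α * ‖u‖ ^ 2 + ρ ^ 2 := by
  have kinetic : ‖vd‖ ^ 2 - ‖v‖ ^ 2
      = -(α * h) * ⟪u + ud, vd + v⟫ - h * (ρd + ρ) * ⟪q, vd + v⟫ := by
    have hdiff : vd - v = -((α * h) • (u + ud)) - (h * (ρd + ρ)) • q := by
      rw [hv]; abel
    rw [← real_inner_sub_add_eq_norm_sq_sub_norm_sq, hdiff, inner_sub_left, inner_neg_left,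
      real_inner_smul_left, real_inner_smul_left]
    ring
  have potential : ‖ud‖ ^ 2 - ‖u‖ ^ 2 = (h / 2) * ⟪u + ud, vd + v⟫ := by
    have hdiff : ud - u = (h / 2) • (vd + v) := by
      rw [hu, add_sub_cancel_left]
    rw [← real_inner_sub_add_eq_norm_sq_sub_norm_sq, hdiff, real_inner_smul_left,
      real_inner_comm, add_comm ud u]
  have auxiliary : ρd ^ 2 - ρ ^ 2 = (h / 2) * ⟪q, vd + v⟫ * (ρd + ρ) := by
    linear_combination (ρd + ρ) * hρ
  linear_combination (1 / 2) * kinetic + α * potential + auxiliary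

end SSAVStep

theorem ssav_energy_preservation_general {m : ℕ} (α h κ C_H : ℝ)
    (Φ : EuclideanSpace ℝ (Fin m) → ℝ)
    (gradΦ : EuclideanSpace ℝ (Fin m) → EuclideanSpace ℝ (Fin m))
    (v u vd ud : EuclideanSpace ℝ (Fin m)) (ρ ρd : ℝ)
    (h1 : vd = v - (α * h) • (u + ud) - (h * (ρd + ρ)) • ssavQ α κ C_H Φ gradΦ u)
    (h2 : ud = u + (h / 2) • (vd + v))
    (h3 : ρd = ρ + (h / 2) * ⟪ssavQ α κ C_H Φ gradΦ u, vd + v⟫) :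
    (1 / 2) * ‖vd‖ ^ 2 + α * ‖ud‖ ^ 2 + ρd ^ 2
      = (1 / 2) * ‖v‖ ^ 2 + α * ‖u‖ ^ 2 + ρ ^ 2 :=
  ssav_step_energy_eq α h ρ ρd _ v u vd ud h1 h2 h3

/-- Energy preservation of the SSAV iteration (Theorem 3.1). -/
theorem ssav_energy_preservation {m : ℕ} (α h κ C_H : ℝ)
    (hα : 0 < α) (hh0 : 0 < h) (hh1 : h ≤ 1) (hκ : 0 < κ)
    (Φ : EuclideanSpace ℝ (Fin m) → ℝ)
    (gradΦ : EuclideanSpace ℝ (Fin m) → EuclideanSpace ℝ (Fin m))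
    (hΦ : ∀ x, HasGradientAt Φ (gradΦ x) x)
    (hwell : ∀ x : EuclideanSpace ℝ (Fin m), κ * Φ x + C_H - α * ‖x‖ ^ 2 ≥ 1)
    (v u vd ud : EuclideanSpace ℝ (Fin m)) (ρ ρd : ℝ)
    (h1 : vd = v - (α * h) • (u + ud) - (h * (ρd + ρ)) • ssavQ α κ C_H Φ gradΦ u)
    (h2 : ud = u + (h / 2) • (vd + v))
    (h3 : ρd = ρ + (h / 2) * ⟪ssavQ α κ C_H Φ gradΦ u, vd + v⟫) :
    (1 / 2) * ‖vd‖ ^ 2 + α * ‖ud‖ ^ 2 + ρd ^ 2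
      = (1 / 2) * ‖v‖ ^ 2 + α * ‖u‖ ^ 2 + ρ ^ 2 :=
  ssav_energy_preservation_general α h κ C_H Φ gradΦ v u vd ud ρ ρd h1 h2 h3
end

section
/- Explicit solvability of the SSAV step, existence part (Proposition 2.3): writing Q := Q(u), D := 2 + α h² + ‖Q‖² h², I := (ρ (2 + α h²) + h ⟨Q, v − α h u⟩) / D, the explicit triple ρ⋆ := ρ + h ⟨Q, 2v − 2αh u − 2h ρ Q⟩ / D, v⋆ := (2v − 4h I Q − 4αh u − α h² v) / (2 + α h²), u⋆ := u + h (2v − 2h I Q − 2αh u) / (2 + α h²) satisfies the one-step SSAV deterministic system, i.e. v⋆ = v − α h (u + u⋆) − h (ρ⋆ + ρ) Q, u⋆ = u + (h/2)(v⋆ + v), and ρ⋆ = ρ + (h/2) ⟨Q, v⋆ + v⟩. -/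
/-!
The explicit triple is the implicit midpoint step solved by hand: `I` is the midpoint value
`(ρ⋆ + ρ) / 2` of the scalar variable. Given that value, the `v`- and `u`-equations are linear with
scalar coefficients and `v⋆`, `u⋆` solve them for every `I`; the `ρ`-equation, paired with `Q`,
becomes the scalar linear equation `I D = ρ (2 + α h²) + h ⟪Q, v - α h u⟫`, which is how `I` is
defined.
-/

open RealInnerProductSpace

namespace SSAV

variable {E : Type*} [NormedAddCommGroup E] [InnerProductSpace ℝ E]
  (α h ρ I : ℝ) (Q v u : E)

noncomputable def vStar : E :=
  (2 + α * h ^ 2)⁻¹ • ((2 : ℝ) • v - (4 * h * I) • Q - (4 * α * h) • u - (α * h ^ 2) • v)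

noncomputable def uStar : E :=
  u + (h / (2 + α * h ^ 2)) • ((2 : ℝ) • v - (2 * h * I) • Q - (2 * α * h) • u)

noncomputable def midValue : ℝ :=
  (ρ * (2 + α * h ^ 2) + h * ⟪Q, v - (α * h) • u⟫) / (2 + α * h ^ 2 + ‖Q‖ ^ 2 * h ^ 2)

noncomputable def rhoStar : ℝ :=
  ρ + h * ⟪Q, (2 : ℝ) • v - (2 * α * h) • u - (2 * h * ρ) • Q⟫ / (2 + α * h ^ 2 + ‖Q‖ ^ 2 * h ^ 2)

variable {α h ρ I Q v u}

theorem vStar_eq (hc : 2 + α * h ^ 2 ≠ 0) :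
    vStar α h I Q v u = v - (α * h) • (u + uStar α h I Q v u) - (h * (2 * I)) • Q := by
  unfold vStar uStar
  match_scalars <;> field_simp <;> ring

theorem vStar_add (hc : 2 + α * h ^ 2 ≠ 0) :
    vStar α h I Q v u + v = (4 / (2 + α * h ^ 2)) • (v - (h * I) • Q - (α * h) • u) := by
  unfold vStar
  match_scalars <;> field_simp
  ring

theorem uStar_eq (hc : 2 + α * h ^ 2 ≠ 0) :
    uStar α h I Q v u = u + (h / 2) • (vStar α h I Q v u + v) := by
  rw [vStar_add hc, uStar, smul_smul]
  match_scalars <;> ring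

theorem inner_vStar_add (hc : 2 + α * h ^ 2 ≠ 0) :
    ⟪Q, vStar α h I Q v u + v⟫ =
      4 / (2 + α * h ^ 2) * (⟪Q, v⟫ - h * I * ‖Q‖ ^ 2 - α * h * ⟪Q, u⟫) := by
  rw [vStar_add hc, real_inner_smul_right, inner_sub_right, inner_sub_right,
    real_inner_smul_right, real_inner_smul_right, real_inner_self_eq_norm_sq]

theorem rhoStar_add (hα : 0 ≤ α) : rhoStar α h ρ Q v u + ρ = 2 * midValue α h ρ Q v u := by
  have hD : 2 + α * h ^ 2 + ‖Q‖ ^ 2 * h ^ 2 ≠ 0 := by positivity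
  rw [rhoStar, midValue, inner_sub_right, inner_sub_right, inner_sub_right, real_inner_smul_right,
    real_inner_smul_right, real_inner_smul_right, real_inner_smul_right,
    real_inner_self_eq_norm_sq]
  field_simp
  ring

theorem rhoStar_eq (hα : 0 ≤ α) :
    rhoStar α h ρ Q v u = ρ + (h / 2) * ⟪Q, vStar α h (midValue α h ρ Q v u) Q v u + v⟫ := by
  have hc : 2 + α * h ^ 2 ≠ 0 := by positivity
  have hD : 2 + α * h ^ 2 + ‖Q‖ ^ 2 * h ^ 2 ≠ 0 := by positivity
  have hID : midValue α h ρ Q v u * (2 + α * h ^ 2 + ‖Q‖ ^ 2 * h ^ 2) =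
      ρ * (2 + α * h ^ 2) + h * (⟪Q, v⟫ - α * h * ⟪Q, u⟫) := by
    rw [midValue, div_mul_cancel₀ _ hD, inner_sub_right, real_inner_smul_right]
  have hmid : rhoStar α h ρ Q v u + ρ = 2 * midValue α h ρ Q v u := rhoStar_add hα
  rw [inner_vStar_add hc]
  field_simp
  linear_combination 4 * hID + 2 * (2 + α * h ^ 2) * hmid

end SSAV

open SSAV in
theorem ssav_explicit_solvable_existence_general {m : ℕ} (α h : ℝ)
    (hα : 0 < α)
    (v u : EuclideanSpace ℝ (Fin m)) (ρ : ℝ)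
    (Q : EuclideanSpace ℝ (Fin m))
    (D I : ℝ)
    (hD : D = 2 + α * h ^ 2 + ‖Q‖ ^ 2 * h ^ 2)
    (hI : I = (ρ * (2 + α * h ^ 2) + h * ⟪Q, v - (α * h) • u⟫) / D)
    (ρs : ℝ) (vs us : EuclideanSpace ℝ (Fin m))
    (hρs : ρs = ρ + h * ⟪Q, (2 : ℝ) • v - (2 * α * h) • u - (2 * h * ρ) • Q⟫ / D)
    (hvs : vs = (2 + α * h ^ 2)⁻¹ •
      ((2 : ℝ) • v - (4 * h * I) • Q - (4 * α * h) • u - (α * h ^ 2) • v))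
    (hus : us = u + (h / (2 + α * h ^ 2)) •
      ((2 : ℝ) • v - (2 * h * I) • Q - (2 * α * h) • u)) :
    vs = v - (α * h) • (u + us) - (h * (ρs + ρ)) • Q ∧
    us = u + (h / 2) • (vs + v) ∧
    ρs = ρ + (h / 2) * ⟪Q, vs + v⟫ := by
  have hc : 2 + α * h ^ 2 ≠ 0 := by positivity
  subst hD
  change I = midValue α h ρ Q v u at hI
  change ρs = rhoStar α h ρ Q v u at hρs
  change vs = vStar α h I Q v u at hvs
  change us = uStar α h I Q v u at hus
  subst hI hρs hvs hus
  refine ⟨?_, uStar_eq hc, rhoStar_eq hα.le⟩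
  rw [rhoStar_add hα.le]
  exact vStar_eq hc

/-- Explicit solvability of the SSAV step, existence part (Proposition 2.3). -/
theorem ssav_explicit_solvable_existence {m : ℕ} (α h κ C_H : ℝ)
    (hα : 0 < α) (hh0 : 0 < h) (hh1 : h ≤ 1) (hκ : 0 < κ)
    (Φ : EuclideanSpace ℝ (Fin m) → ℝ)
    (gradΦ : EuclideanSpace ℝ (Fin m) → EuclideanSpace ℝ (Fin m))
    (hΦ : ∀ x, HasGradientAt Φ (gradΦ x) x)
    (hwell : ∀ x : EuclideanSpace ℝ (Fin m), κ * Φ x + C_H - α * ‖x‖ ^ 2 ≥ 1)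
    (v u : EuclideanSpace ℝ (Fin m)) (ρ : ℝ)
    (Q : EuclideanSpace ℝ (Fin m)) (hQdef : Q = ssavQ α κ C_H Φ gradΦ u)
    (D I : ℝ)
    (hD : D = 2 + α * h ^ 2 + ‖Q‖ ^ 2 * h ^ 2)
    (hI : I = (ρ * (2 + α * h ^ 2) + h * ⟪Q, v - (α * h) • u⟫) / D)
    (ρs : ℝ) (vs us : EuclideanSpace ℝ (Fin m))
    (hρs : ρs = ρ + h * ⟪Q, (2 : ℝ) • v - (2 * α * h) • u - (2 * h * ρ) • Q⟫ / D)
    (hvs : vs = (2 + α * h ^ 2)⁻¹ •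
      ((2 : ℝ) • v - (4 * h * I) • Q - (4 * α * h) • u - (α * h ^ 2) • v))
    (hus : us = u + (h / (2 + α * h ^ 2)) •
      ((2 : ℝ) • v - (2 * h * I) • Q - (2 * α * h) • u)) :
    vs = v - (α * h) • (u + us) - (h * (ρs + ρ)) • Q ∧
    us = u + (h / 2) • (vs + v) ∧
    ρs = ρ + (h / 2) * ⟪Q, vs + v⟫ :=
  ssav_explicit_solvable_existence_general α h hα v u ρ Q D I hD hI ρs vs us hρs hvs hus
end

section
/- Explicit solvability of the SSAV step, uniqueness part (Proposition 2.3): writing Q := Q(u), D := 2 + α h² + ‖Q‖² h², I := (ρ (2 + α h²) + h ⟨Q, v − α h u⟩) / D, if (v△, u△, ρ△) ∈ E × E × ℝ satisfies the one-step SSAV deterministic system v△ = v − α h (u + u△) − h (ρ△ + ρ) Q, u△ = u + (h/2)(v△ + v), ρ△ = ρ + (h/2) ⟨Q, v△ + v⟩, then ρ△ = ρ + h ⟨Q, 2v − 2αh u − 2h ρ Q⟩ / D, v△ = (2v − 4h I Q − 4αh u − α h² v) / (2 + α h²), and u△ = u + h (2v − 2h I Q − 2αh u) / (2 + α h²). 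-/
open RealInnerProductSpace

/-!
The SSAV step is linear in `(v△, u△, ρ△)`. Substituting the second equation into the first
expresses `(2 + α h²) v△` through `v`, `u` and the single scalar `ρ△ + ρ`. Pairing that with `Q`
and inserting it into the third equation leaves one scalar equation
`(ρ△ + ρ) D = 2 (ρ (2 + α h²) + h ⟪Q, v − α h u⟫)`, so `ρ△ + ρ = 2 I`, and `v△`, `u△` follow.
-/

section SSAVStep

variable {E : Type*} [NormedAddCommGroup E] [InnerProductSpace ℝ E]
  {α h c : ℝ} {Q v u vd ud : E}

theorem ssav_step_smul_velocity (h1 : vd = v - (α * h) • (u + ud) - c • Q)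
    (h2 : ud = u + (h / 2) • (vd + v)) :
    (2 + α * h ^ 2) • vd =
      (2 : ℝ) • v - (2 * c) • Q - (4 * α * h) • u - (α * h ^ 2) • v := by
  linear_combination (norm := module) (2 : ℝ) • h1 - (2 * α * h) • h2

theorem ssav_step_smul_position (h1 : vd = v - (α * h) • (u + ud) - c • Q)
    (h2 : ud = u + (h / 2) • (vd + v)) :
    (2 + α * h ^ 2) • ud =
      (2 + α * h ^ 2) • u + h • ((2 : ℝ) • v - c • Q - (2 * α * h) • u) := by
  linear_combination (norm := module)
    (2 + α * h ^ 2) • h2 + (h / 2) • ssav_step_smul_velocity h1 h2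

theorem ssav_step_rho_add_mul {ρ ρd : ℝ}
    (h1 : vd = v - (α * h) • (u + ud) - (h * (ρd + ρ)) • Q)
    (h2 : ud = u + (h / 2) • (vd + v)) (h3 : ρd = ρ + (h / 2) * ⟪Q, vd + v⟫) :
    (ρd + ρ) * (2 + α * h ^ 2 + ‖Q‖ ^ 2 * h ^ 2) =
      2 * (ρ * (2 + α * h ^ 2) + h * ⟪Q, v - (α * h) • u⟫) := by
  have hvd := congrArg (⟪Q, ·⟫) (ssav_step_smul_velocity h1 h2)
  simp only [inner_sub_right, inner_add_right, real_inner_smul_right,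
    real_inner_self_eq_norm_sq] at hvd h3 ⊢
  linear_combination (2 + α * h ^ 2) * h3 + (h / 2) * hvd

end SSAVStep

theorem ssav_explicit_solvable_uniqueness_general {m : ℕ} (α h : ℝ)
    (hα : 0 < α)
    (v u : EuclideanSpace ℝ (Fin m)) (ρ : ℝ)
    (Q : EuclideanSpace ℝ (Fin m))
    (D I : ℝ)
    (hD : D = 2 + α * h ^ 2 + ‖Q‖ ^ 2 * h ^ 2)
    (hI : I = (ρ * (2 + α * h ^ 2) + h * ⟪Q, v - (α * h) • u⟫) / D)
    (vd ud : EuclideanSpace ℝ (Fin m)) (ρd : ℝ)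
    (h1 : vd = v - (α * h) • (u + ud) - (h * (ρd + ρ)) • Q)
    (h2 : ud = u + (h / 2) • (vd + v))
    (h3 : ρd = ρ + (h / 2) * ⟪Q, vd + v⟫) :
    ρd = ρ + h * ⟪Q, (2 : ℝ) • v - (2 * α * h) • u - (2 * h * ρ) • Q⟫ / D ∧
    vd = (2 + α * h ^ 2)⁻¹ •
      ((2 : ℝ) • v - (4 * h * I) • Q - (4 * α * h) • u - (α * h ^ 2) • v) ∧
    ud = u + (h / (2 + α * h ^ 2)) •
      ((2 : ℝ) • v - (2 * h * I) • Q - (2 * α * h) • u) := by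
  have hA : 2 + α * h ^ 2 ≠ 0 := by positivity
  have hDpos : 0 < D := hD ▸ by positivity
  have hσ : ρd + ρ = 2 * I := by
    rw [hI, mul_div_assoc', eq_div_iff hDpos.ne', hD]
    exact ssav_step_rho_add_mul h1 h2 h3
  have hc : h * (ρd + ρ) = 2 * h * I := by rw [hσ]; ring
  rw [hc] at h1
  refine ⟨?_, ?_, ?_⟩
  · rw [show ρd = 2 * I - ρ by linarith, hI, hD]
    simp only [inner_sub_right, real_inner_smul_right, real_inner_self_eq_norm_sq]
    field_simp
    ring
  · rw [eq_inv_smul_iff₀ hA, ssav_step_smul_velocity h1 h2]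
    ring_nf
  · refine smul_right_injective _ hA ?_
    dsimp only
    rw [ssav_step_smul_position h1 h2, smul_add, smul_smul, mul_div_cancel₀ _ hA]

/-- Explicit solvability of the SSAV step, uniqueness part (Proposition 2.3). -/
theorem ssav_explicit_solvable_uniqueness {m : ℕ} (α h κ C_H : ℝ)
    (hα : 0 < α) (hh0 : 0 < h) (hh1 : h ≤ 1) (hκ : 0 < κ)
    (Φ : EuclideanSpace ℝ (Fin m) → ℝ)
    (gradΦ : EuclideanSpace ℝ (Fin m) → EuclideanSpace ℝ (Fin m))
    (hΦ : ∀ x, HasGradientAt Φ (gradΦ x) x)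
    (hwell : ∀ x : EuclideanSpace ℝ (Fin m), κ * Φ x + C_H - α * ‖x‖ ^ 2 ≥ 1)
    (v u : EuclideanSpace ℝ (Fin m)) (ρ : ℝ)
    (Q : EuclideanSpace ℝ (Fin m)) (hQdef : Q = ssavQ α κ C_H Φ gradΦ u)
    (D I : ℝ)
    (hD : D = 2 + α * h ^ 2 + ‖Q‖ ^ 2 * h ^ 2)
    (hI : I = (ρ * (2 + α * h ^ 2) + h * ⟪Q, v - (α * h) • u⟫) / D)
    (vd ud : EuclideanSpace ℝ (Fin m)) (ρd : ℝ)
    (h1 : vd = v - (α * h) • (u + ud) - (h * (ρd + ρ)) • Q)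
    (h2 : ud = u + (h / 2) • (vd + v))
    (h3 : ρd = ρ + (h / 2) * ⟪Q, vd + v⟫) :
    ρd = ρ + h * ⟪Q, (2 : ℝ) • v - (2 * α * h) • u - (2 * h * ρ) • Q⟫ / D ∧
    vd = (2 + α * h ^ 2)⁻¹ •
      ((2 : ℝ) • v - (4 * h * I) • Q - (4 * α * h) • u - (α * h ^ 2) • v) ∧
    ud = u + (h / (2 + α * h ^ 2)) •
      ((2 : ℝ) • v - (2 * h * I) • Q - (2 * α * h) • u) :=
  ssav_explicit_solvable_uniqueness_general α h hα v u ρ Q D I hD hI vd ud ρd h1 h2 h3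
end
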